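/- Let m ≥ 1, let x : Fin m → EuclideanSpace ℝ (Fin 3) be a point configuration, let R be a 3×3 real matrix with R * Rᵀ = 1, and let v ∈ ℝ³. Then the frame set of the transformed configuration equals the left translate of the original frame set: F(fun i => R.mulVec (x i) + v) = { (R * Q, R.mulVec s + v) : (Q, s) ∈ F(x) }. -/

import Mathlib

open Matrix

/-- Reinterpret a plain vector `Fin 3 → ℝ` as a point of `EuclideanSpace ℝ (Fin 3)`
(the identity map on the underlying data). -/
def toE (v : Fin 3 → ℝ) : EuclideanSpace ℝ (Fin 3) := WithLp.toLp 2 v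

/-- The centroid of a point configuration. -/
noncomputable def centroid {m : ℕ} (x : Fin m → EuclideanSpace ℝ (Fin 3)) :
    EuclideanSpace ℝ (Fin 3) :=
  (m : ℝ)⁻¹ • ∑ i, x i

/-- The outer product `p pᵀ` of a vector with itself. -/
def outerSq (p : EuclideanSpace ℝ (Fin 3)) : Matrix (Fin 3) (Fin 3) ℝ :=
  Matrix.of fun a b => p a * p b

/-- The covariance matrix of a point configuration. -/
noncomputable def cov {m : ℕ} (x : Fin m → EuclideanSpace ℝ (Fin 3)) :
    Matrix (Fin 3) (Fin 3) ℝ :=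
  (m : ℝ)⁻¹ • ∑ i, outerSq (x i - centroid x)

/-- `lam` lists the eigenvalues of the symmetric matrix `C` in ascending order:
it is monotone and `C` is orthogonally diagonalized with diagonal `lam`. -/
def IsSortedEigs (C : Matrix (Fin 3) (Fin 3) ℝ) (lam : Fin 3 → ℝ) : Prop :=
  Monotone lam ∧ ∃ P : Matrix (Fin 3) (Fin 3) ℝ,
    P * Pᵀ = 1 ∧ C = P * Matrix.diagonal lam * Pᵀ

/-- The frame set of a point configuration: pairs `(Q, centroid x)` where the `j`-th column
of `Q` is a unit eigenvector of `cov x` for the `j`-th eigenvalue in ascending order. -/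
noncomputable def frameSet {m : ℕ} (x : Fin m → EuclideanSpace ℝ (Fin 3)) :
    Set (Matrix (Fin 3) (Fin 3) ℝ × EuclideanSpace ℝ (Fin 3)) :=
  { Qs | Qs.2 = centroid x ∧ ∃ lam : Fin 3 → ℝ, IsSortedEigs (cov x) lam ∧
      ∀ j : Fin 3, ‖toE (Qs.1ᵀ j)‖ = 1 ∧
        (cov x).mulVec (Qs.1ᵀ j) = lam j • Qs.1ᵀ j }


/-!
The centroid and the covariance are equivariant under `p ↦ R p + v`: the centroid moves to
`R (centroid x) + v`, the translation cancels in `x i - centroid x`, and so `cov` becomes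
`R (cov x) Rᵀ`. Conjugating by an orthogonal `R` keeps the sorted spectrum, and `q ↦ R q` is an
isometry mapping the `λ`-eigenvectors of `C` onto those of `R C Rᵀ`. Hence `(R Q, R s + v)` is a
frame of the moved configuration iff `(Q, s)` is a frame of `x`, and `(Q, s) ↦ (R Q, R s + v)` is
onto because `R` is invertible.
-/
namespace Matrix

lemma transpose_mul_apply {l m n α : Type*} [Fintype m] [CommSemiring α] (R : Matrix l m α)
    (Q : Matrix m n α) (j : n) : (R * Q)ᵀ j = R *ᵥ Qᵀ j := by
  ext i
  simp [mulVec, dotProduct, mul_apply]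

variable {n : Type*} [Fintype n] [DecidableEq n]

lemma toEuclideanLin_leftInverse {𝕜 : Type*} [RCLike 𝕜] {A B : Matrix n n 𝕜} (h : B * A = 1) :
    Function.LeftInverse (toEuclideanLin B) (toEuclideanLin A) := fun p =>
  WithLp.ofLp_injective 2 (by simp [mulVec_mulVec, h])

lemma norm_toLp_mulVec {R : Matrix n n ℝ} (hR : Rᵀ * R = 1) (q : n → ℝ) :
    ‖(WithLp.toLp 2 (R *ᵥ q) : EuclideanSpace ℝ n)‖ = ‖(WithLp.toLp 2 q : EuclideanSpace ℝ n)‖ := by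
  refine (sq_eq_sq₀ (norm_nonneg _) (norm_nonneg _)).1 ?_
  rw [← real_inner_self_eq_norm_sq, ← real_inner_self_eq_norm_sq, EuclideanSpace.inner_toLp_toLp,
    EuclideanSpace.inner_toLp_toLp, star_trivial, star_trivial, dotProduct_mulVec,
    ← mulVec_transpose, mulVec_mulVec, hR, one_mulVec]

lemma conj_mulVec_eq_smul_iff {R : Matrix n n ℝ} (hR : Rᵀ * R = 1) (C : Matrix n n ℝ) (μ : ℝ)
    (q : n → ℝ) : (R * C * Rᵀ) *ᵥ (R *ᵥ q) = μ • (R *ᵥ q) ↔ C *ᵥ q = μ • q := by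
  have hinj : Function.Injective (R *ᵥ ·) :=
    Function.LeftInverse.injective (g := (Rᵀ *ᵥ ·)) fun q => by
      simp only [mulVec_mulVec, hR, one_mulVec]
  rw [mulVec_mulVec, Matrix.mul_assoc (R * C), hR, Matrix.mul_one, ← mulVec_mulVec, ← mulVec_smul,
    hinj.eq_iff]

end Matrix

lemma IsSortedEigs.conj {C : Matrix (Fin 3) (Fin 3) ℝ} {lam : Fin 3 → ℝ} (h : IsSortedEigs C lam)
    {R : Matrix (Fin 3) (Fin 3) ℝ} (hR : R * Rᵀ = 1) : IsSortedEigs (R * C * Rᵀ) lam := by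
  obtain ⟨hmono, P, hP, rfl⟩ := h
  refine ⟨hmono, R * P, ?_, ?_⟩
  · rw [transpose_mul, Matrix.mul_assoc, ← Matrix.mul_assoc P, hP, Matrix.one_mul, hR]
  · simp only [transpose_mul, Matrix.mul_assoc]

lemma isSortedEigs_conj_iff {C R : Matrix (Fin 3) (Fin 3) ℝ} {lam : Fin 3 → ℝ} (hR : R * Rᵀ = 1) :
    IsSortedEigs (R * C * Rᵀ) lam ↔ IsSortedEigs C lam := by
  refine ⟨fun h => ?_, fun h => h.conj hR⟩
  have hR' : Rᵀ * R = 1 := mul_eq_one_comm.mp hR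
  have hC : Rᵀ * (R * C * Rᵀ) * Rᵀᵀ = C := by
    rw [transpose_transpose, ← Matrix.mul_assoc, ← Matrix.mul_assoc, hR', Matrix.one_mul,
      Matrix.mul_assoc, hR', Matrix.mul_one]
  exact hC ▸ h.conj (by rwa [transpose_transpose])

def IsEigenframe (C Q : Matrix (Fin 3) (Fin 3) ℝ) : Prop :=
  ∃ lam : Fin 3 → ℝ, IsSortedEigs C lam ∧ ∀ j : Fin 3, ‖toE (Qᵀ j)‖ = 1 ∧ C *ᵥ Qᵀ j = lam j • Qᵀ j

lemma isEigenframe_conj_iff {C Q R : Matrix (Fin 3) (Fin 3) ℝ} (hR : R * Rᵀ = 1) :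
    IsEigenframe (R * C * Rᵀ) (R * Q) ↔ IsEigenframe C Q := by
  have hR' : Rᵀ * R = 1 := mul_eq_one_comm.mp hR
  simp only [IsEigenframe, toE, transpose_mul_apply, isSortedEigs_conj_iff hR,
    norm_toLp_mulVec hR', conj_mulVec_eq_smul_iff hR']

section Configuration

variable {m : ℕ} (x : Fin m → EuclideanSpace ℝ (Fin 3))

lemma mem_frameSet_iff {Qs : Matrix (Fin 3) (Fin 3) ℝ × EuclideanSpace ℝ (Fin 3)} :
    Qs ∈ frameSet x ↔ Qs.2 = centroid x ∧ IsEigenframe (cov x) Qs.1 :=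
  Iff.rfl

lemma centroid_map (hm : m ≠ 0) (A : EuclideanSpace ℝ (Fin 3) →ₗ[ℝ] EuclideanSpace ℝ (Fin 3))
    (v : EuclideanSpace ℝ (Fin 3)) : centroid (fun i => A (x i) + v) = A (centroid x) + v := by
  simp [centroid, Finset.sum_add_distrib, smul_add, ← Nat.cast_smul_eq_nsmul ℝ, smul_smul,
    inv_mul_cancel₀ (Nat.cast_ne_zero.2 hm : (m : ℝ) ≠ 0)]

omit x in
lemma outerSq_toEuclideanLin (R : Matrix (Fin 3) (Fin 3) ℝ) (p : EuclideanSpace ℝ (Fin 3)) :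
    outerSq (toEuclideanLin R p) = R * outerSq p * Rᵀ := by
  change vecMulVec (R *ᵥ p) (R *ᵥ p) = R * vecMulVec p p * Rᵀ
  rw [mul_vecMulVec, vecMulVec_mul, vecMul_transpose]

lemma cov_map (hm : m ≠ 0) (R : Matrix (Fin 3) (Fin 3) ℝ) (v : EuclideanSpace ℝ (Fin 3)) :
    cov (fun i => toEuclideanLin R (x i) + v) = R * cov x * Rᵀ := by
  simp only [cov, centroid_map x hm, add_sub_add_right_eq_sub, ← map_sub, outerSq_toEuclideanLin,
    ← Finset.sum_mul, ← Matrix.mul_sum, Matrix.mul_smul, Matrix.smul_mul]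

lemma map_mem_frameSet_iff (hm : m ≠ 0) {R : Matrix (Fin 3) (Fin 3) ℝ} (hR : R * Rᵀ = 1)
    (v : EuclideanSpace ℝ (Fin 3)) (Q : Matrix (Fin 3) (Fin 3) ℝ) (s : EuclideanSpace ℝ (Fin 3)) :
    (R * Q, toEuclideanLin R s + v) ∈ frameSet (fun i => toEuclideanLin R (x i) + v) ↔
      (Q, s) ∈ frameSet x := by
  rw [mem_frameSet_iff, mem_frameSet_iff, centroid_map x hm, cov_map x hm, isEigenframe_conj_iff hR,
    add_left_inj, (toEuclideanLin_leftInverse (mul_eq_one_comm.mp hR)).injective.eq_iff]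

end Configuration

/-- **Equivariance of the frame set.** If `R * Rᵀ = 1` and `v ∈ ℝ³`, the frame set of the
transformed configuration `i ↦ R (x i) + v` is exactly the left translate
`{(R * Q, R s + v) : (Q, s) ∈ F(x)}` of the frame set of `x`. -/
theorem frameSet_map_eq {m : ℕ} (hm : 1 ≤ m) (x : Fin m → EuclideanSpace ℝ (Fin 3))
    (R : Matrix (Fin 3) (Fin 3) ℝ) (hR : R * Rᵀ = 1) (v : EuclideanSpace ℝ (Fin 3)) :
    frameSet (fun i => toE (R.mulVec (x i)) + v) =
      (fun Qs : Matrix (Fin 3) (Fin 3) ℝ × EuclideanSpace ℝ (Fin 3) =>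
        (R * Qs.1, toE (R.mulVec Qs.2) + v)) '' frameSet x := by
  let φ := fun Qs : Matrix (Fin 3) (Fin 3) ℝ × EuclideanSpace ℝ (Fin 3) =>
    (R * Qs.1, toEuclideanLin R Qs.2 + v)
  change frameSet (fun i => toEuclideanLin R (x i) + v) = φ '' frameSet x
  have hφ : Function.Surjective φ := fun Qs =>
    ⟨(Rᵀ * Qs.1, toEuclideanLin Rᵀ (Qs.2 - v)), by
      simp only [φ, ← Matrix.mul_assoc, hR, Matrix.one_mul,
        toEuclideanLin_leftInverse (A := Rᵀ) hR (Qs.2 - v), sub_add_cancel]⟩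
  have hpre : frameSet x = φ ⁻¹' frameSet (fun i => toEuclideanLin R (x i) + v) := by
    ext ⟨Q, s⟩
    exact (map_mem_frameSet_iff x (by omega) hR v Q s).symm
  rw [hpre, Set.image_preimage_eq _ hφ]
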